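/- arXiv:1609.02694 — 2 statements merged into one kernel-verified Lean document; each statement's English description precedes it below -/
import Mathlib

section
/- If δ ≤ Δ and T ≥ δ, the maximum number of servers that can be affected by f mobile Byzantine agents for at least one time unit in a time interval of length T is (⌈T/Δ⌉ + 1)·f. Formally: a single agent occupying one server at interval start and moving to a new server every Δ time units can occupy at most ⌈T/Δ⌉ + 1 distinct servers during an interval of length T, and f agents can occupy at most (⌈T/Δ⌉ + 1)·f servers. -/
/-- Mobile Byzantine agents move at times `t0 + iΔ` (`i : ℤ`); `pos a i` is the
server occupied by agent `a` during the `i`-th period `[t0 + iΔ, t0 + (i+1)Δ)`.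
If `0 < δ ≤ Δ` and `δ ≤ T`, then the set of servers affected for at least one
time unit during `[t, t+T]` (i.e. occupied during some period overlapping the
interval) has at most `(⌈T/Δ⌉ + 1) * f` elements; in particular a single agent
occupies at most `⌈T/Δ⌉ + 1` distinct servers. -/
theorem stmt3 (Server : Type*) (f : ℕ) (pos : Fin f → ℤ → Server)
    (t0 Δ δ T t : ℝ) (hδ : 0 < δ) (hΔ : δ ≤ Δ) (hT : δ ≤ T) :
    (∀ a : Fin f,
      Set.ncard {s : Server | ∃ i : ℤ, pos a i = s ∧
        t0 + i * Δ < t + T ∧ t < t0 + (i + 1) * Δ} ≤ ⌈T / Δ⌉₊ + 1) ∧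
    Set.ncard {s : Server | ∃ a : Fin f, ∃ i : ℤ, pos a i = s ∧
        t0 + i * Δ < t + T ∧ t < t0 + (i + 1) * Δ} ≤ (⌈T / Δ⌉₊ + 1) * f := by
  have hΔ0 : (0:ℝ) < Δ := lt_of_lt_of_le hδ hΔ
  set L : ℤ := ⌊(t - t0) / Δ⌋ with hL
  set I : Finset ℤ := Finset.Ico L (L + (↑(⌈T / Δ⌉₊ + 1) : ℤ)) with hI
  have key : ∀ i : ℤ, t0 + i * Δ < t + T → t < t0 + (i + 1) * Δ → i ∈ I := by
    intro i h1 h2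
    have hlo : L ≤ i := by
      have hr : (t - t0) / Δ < (i : ℝ) + 1 := by
        rw [div_lt_iff₀ hΔ0]; push_cast; nlinarith
      have : L < i + 1 := by
        rw [hL, Int.floor_lt]; push_cast; exact hr
      omega
    have hhi : i < L + (↑(⌈T / Δ⌉₊ + 1) : ℤ) := by
      have h1' : (i : ℝ) < (t - t0) / Δ + T / Δ := by
        rw [← add_div, lt_div_iff₀ hΔ0]; nlinarith
      have h2' : (t - t0) / Δ < (L : ℝ) + 1 := Int.lt_floor_add_one _
      have h3' : T / Δ ≤ (⌈T / Δ⌉₊ : ℝ) := Nat.le_ceil _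
      have : (i : ℝ) < (L : ℝ) + (↑(⌈T / Δ⌉₊ + 1) : ℝ) := by push_cast; linarith
      exact_mod_cast this
    exact Finset.mem_Ico.mpr ⟨hlo, hhi⟩
  have hcard : I.card = ⌈T / Δ⌉₊ + 1 := by
    rw [hI, Int.card_Ico]; simp
  constructor
  · intro a
    have hsub : {s : Server | ∃ i : ℤ, pos a i = s ∧
        t0 + i * Δ < t + T ∧ t < t0 + (i + 1) * Δ} ⊆ pos a '' (I : Set ℤ) := by
      rintro s ⟨i, hpi, h1, h2⟩
      exact ⟨i, key i h1 h2, hpi⟩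
    calc Set.ncard _ ≤ (pos a '' (I : Set ℤ)).ncard :=
          Set.ncard_le_ncard hsub ((I.finite_toSet).image _)
      _ ≤ (I : Set ℤ).ncard := Set.ncard_image_le I.finite_toSet
      _ = I.card := Set.ncard_coe_finset I
      _ = ⌈T / Δ⌉₊ + 1 := hcard
  · have hsub : {s : Server | ∃ a : Fin f, ∃ i : ℤ, pos a i = s ∧
        t0 + i * Δ < t + T ∧ t < t0 + (i + 1) * Δ} ⊆
        (fun p : Fin f × ℤ => pos p.1 p.2) '' ((Finset.univ ×ˢ I : Finset (Fin f × ℤ)) : Set (Fin f × ℤ)) := by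
      rintro s ⟨a, i, hpi, h1, h2⟩
      exact ⟨(a, i), by simpa using key i h1 h2, hpi⟩
    calc Set.ncard _ ≤ _ := Set.ncard_le_ncard hsub (((Finset.univ ×ˢ I).finite_toSet).image _)
      _ ≤ ((Finset.univ ×ˢ I : Finset (Fin f × ℤ)) : Set (Fin f × ℤ)).ncard :=
          Set.ncard_image_le (Finset.univ ×ˢ I).finite_toSet
      _ = (Finset.univ ×ˢ I).card := Set.ncard_coe_finset _
      _ = f * (⌈T / Δ⌉₊ + 1) := by simp [Finset.card_product, hcard]
      _ = (⌈T / Δ⌉₊ + 1) * f := Nat.mul_comm _ _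
end

section
/- If in a multiset of replies, each collected reply comes either from one of at least c correct servers (all of which report the pair (v, sn)) or from at most b < c incorrect servers (reporting arbitrary pairs), then (v, sn) occurs at least c times while any pair different from every correct report occurs at most b < c times; hence selecting a value that occurs at least c times and among those taking the one with maximal (well-ordered) timestamp returns a pair reported by some correct server. -/
/-- Replies form a multiset of (value, timestamp) pairs indexed by server.
If every server is either one of at least `c` correct servers (all reporting
the same pair `(v, sn)`) or one of at most `b < c` incorrect servers (reporting
arbitrary pairs), then `(v, sn)` occurs at least `c` times, any pair different
from the correct report occurs at most `b < c` times, and consequently any pair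
occurring at least `c` times equals the pair reported by the correct servers. -/
theorem stmt15 (ι Val : Type) [Fintype ι] [DecidableEq ι] [DecidableEq Val]
    (reply : ι → Val × ZMod 5) (C B : Finset ι) (v : Val) (sn : ZMod 5)
    (c b : ℕ)
    (hC : ∀ i ∈ C, reply i = (v, sn))
    (hCcard : c ≤ C.card) (hBcard : B.card ≤ b) (hbc : b < c)
    (hcover : ∀ i : ι, i ∈ C ∨ i ∈ B) (hdisj : Disjoint C B) :
    (c ≤ (Finset.univ.filter (fun i => reply i = (v, sn))).card) ∧
    (∀ p : Val × ZMod 5, p ≠ (v, sn) →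
      (Finset.univ.filter (fun i => reply i = p)).card ≤ b) ∧
    (∀ p : Val × ZMod 5,
      c ≤ (Finset.univ.filter (fun i => reply i = p)).card → p = (v, sn)) := by
  have h1 : c ≤ (Finset.univ.filter (fun i => reply i = (v, sn))).card := by
    refine hCcard.trans (Finset.card_le_card ?_)
    intro i hi
    simp [hC i hi]
  have h2 : ∀ p : Val × ZMod 5, p ≠ (v, sn) →
      (Finset.univ.filter (fun i => reply i = p)).card ≤ b := by
    intro p hp
    refine le_trans (Finset.card_le_card ?_) hBcard
    intro i hi
    simp only [Finset.mem_filter, Finset.mem_univ, true_and] at hi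
    rcases hcover i with h | h
    · exact absurd (hC i h ▸ hi).symm hp
    · exact h
  refine ⟨h1, h2, fun p hp => ?_⟩
  by_contra hne
  exact absurd (hp.trans (h2 p hne)) (not_le.mpr hbc)
end
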